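/- arXiv:2509.24234 — 6 statements merged into one kernel-verified Lean document; each statement's English description precedes it below -/
import Mathlib

section
/- Let p > 1 be real, a > 0, b > 0, and r ∈ (0,b). Then ∑_{k ∈ ℤ} (e^{-a p^{kb}} - e^{-a p^{(k+1)b}}) · p^{-kr} ≤ p^r · a^{r/b} · Γ(1 - r/b), where Γ is the Gamma function. -/
/-!
Cut `(0, ∞)` at the points `p ^ (k b)`. The `k`-th term is `p ^ (-k r) ∫ a e^{-a t} dt` over
`(p ^ (k b), p ^ ((k + 1) b)]`, and on that interval `p ^ (-k r) ≤ p ^ r t ^ (-r / b)` because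
`t ^ (-r / b)` decreases. Summing over `k` therefore bounds the series by
`p ^ r ∫₀^∞ a t ^ (-r / b) e^{-a t} dt = p ^ r a ^ (r / b) Γ(1 - r / b)`.
-/

open Real MeasureTheory Set
open scoped Function

theorem tsum_le_setIntegral_iUnion {α ι : Type*} [MeasurableSpace α] {μ : Measure α}
    [Countable ι] {f : ι → ℝ} {G : α → ℝ} {S : ι → Set α} (hf : ∀ i, 0 ≤ f i)
    (hS : ∀ i, MeasurableSet (S i)) (hd : Pairwise (Disjoint on S))
    (hG : IntegrableOn G (⋃ i, S i) μ) (hle : ∀ i, f i ≤ ∫ x in S i, G x ∂μ) :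
    ∑' i, f i ≤ ∫ x in ⋃ i, S i, G x ∂μ := by
  have hsum := hasSum_integral_iUnion hS hd hG
  exact hsum.tsum_eq ▸
    Summable.tsum_le_tsum hle (hsum.summable.of_nonneg_of_le hf hle) hsum.summable

namespace Real

theorem rpow_mul_le_rpow_add_one_mul {p b : ℝ} (hp : 1 ≤ p) (hb : 0 ≤ b) (x : ℝ) :
    p ^ (x * b) ≤ p ^ ((x + 1) * b) :=
  rpow_le_rpow_of_exponent_le hp (by nlinarith)

theorem pairwise_disjoint_on_Ioc_rpow_intCast_mul {p b : ℝ} (hp : 1 ≤ p) (hb : 0 ≤ b) :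
    Pairwise (Disjoint on
      fun k : ℤ => Ioc (p ^ ((k : ℝ) * b)) (p ^ (((k : ℝ) + 1) * b))) := by
  have hmono : Monotone fun k : ℤ => p ^ ((k : ℝ) * b) := fun j k hjk =>
    rpow_le_rpow_of_exponent_le hp (by gcongr)
  simpa [Order.succ_eq_add_one] using hmono.pairwise_disjoint_on_Ioc_succ

theorem iUnion_Ioc_rpow_intCast_mul {p b : ℝ} (hp : 1 < p) (hb : 0 < b) :
    ⋃ k : ℤ, Ioc (p ^ ((k : ℝ) * b)) (p ^ (((k : ℝ) + 1) * b)) = Ioi 0 := by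
  have hp0 : 0 < p := one_pos.trans hp
  ext t
  simp only [mem_iUnion, mem_Ioc, mem_Ioi]
  constructor
  · rintro ⟨k, hk, -⟩
    exact (rpow_pos_of_pos hp0 _).trans hk
  · intro ht
    have hc : 0 < b * log p := mul_pos hb (log_pos hp)
    obtain ⟨k, hk⟩ := mem_iUnion.1 ((iUnion_Ioc_zsmul hc).symm ▸ mem_univ (log t))
    rw [mem_Ioc, zsmul_eq_mul, zsmul_eq_mul] at hk
    refine ⟨k, ?_, ?_⟩
    · rw [rpow_def_of_pos hp0, ← exp_log ht, exp_lt_exp]; push_cast at hk; linarith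
    · rw [rpow_def_of_pos hp0, ← exp_log ht, exp_le_exp]; push_cast at hk; linarith

theorem integral_mul_exp_neg_mul (a x y : ℝ) :
    ∫ t in x..y, a * exp (-(a * t)) = exp (-(a * x)) - exp (-(a * y)) := by
  have hderiv : ∀ t ∈ uIcc x y,
      HasDerivAt (fun t => -exp (-(a * t))) (a * exp (-(a * t))) t := fun t _ => by
    simpa [mul_comm] using (((hasDerivAt_id t).const_mul a).neg.exp).fun_neg
  rw [intervalIntegral.integral_eq_sub_of_hasDerivAt hderiv
    (Continuous.intervalIntegrable (by fun_prop) _ _)]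
  ring

theorem integrableOn_rpow_neg_mul_exp_neg_mul {a q : ℝ} (ha : 0 < a) (hq : q < 1) :
    IntegrableOn (fun t => t ^ (-q) * exp (-(a * t))) (Ioi 0) := by
  simpa using integrableOn_rpow_mul_exp_neg_mul_rpow (by linarith) zero_lt_one ha

theorem integral_mul_rpow_neg_mul_exp_neg_mul {a q : ℝ} (ha : 0 < a) (hq : q < 1) :
    ∫ t in Ioi 0, a * (t ^ (-q) * exp (-(a * t))) = a ^ q * Gamma (1 - q) := by
  have h := integral_rpow_mul_exp_neg_mul_Ioi (sub_pos.2 hq) ha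
  rw [sub_sub_cancel_left] at h
  rw [integral_const_mul, h, ← mul_assoc, one_div, inv_rpow ha.le, ← rpow_neg ha.le,
    mul_comm a, ← rpow_add_one ha.ne']
  ring_nf

theorem rpow_neg_mul_le_mul_rpow_neg_div {p b r x t : ℝ} (hp : 0 < p) (hb : 0 < b) (hr : 0 ≤ r)
    (ht : 0 < t) (htx : t ≤ p ^ ((x + 1) * b)) :
    p ^ (-(x * r)) ≤ p ^ r * t ^ (-(r / b)) := calc
  p ^ (-(x * r)) = p ^ r * (p ^ ((x + 1) * b)) ^ (-(r / b)) := by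
    rw [← rpow_mul hp.le, ← rpow_add hp]
    congr 1
    field_simp
    ring
  _ ≤ p ^ r * t ^ (-(r / b)) := mul_le_mul_of_nonneg_left
    (rpow_le_rpow_of_nonpos ht htx (neg_nonpos.2 (div_nonneg hr hb.le))) (rpow_nonneg hp.le r)

theorem exp_sub_exp_mul_rpow_le_setIntegral {p a b r x : ℝ} (hp : 1 < p) (ha : 0 < a)
    (hb : 0 < b) (hr : 0 ≤ r) (hrb : r < b) :
    (exp (-(a * p ^ (x * b))) - exp (-(a * p ^ ((x + 1) * b)))) * p ^ (-(x * r))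
      ≤ ∫ t in Ioc (p ^ (x * b)) (p ^ ((x + 1) * b)),
          p ^ r * (a * (t ^ (-(r / b)) * exp (-(a * t)))) := by
  have hp0 : 0 < p := one_pos.trans hp
  have hpos : Ioc (p ^ (x * b)) (p ^ ((x + 1) * b)) ⊆ Ioi 0 := fun t ht =>
    (rpow_pos_of_pos hp0 _).trans ht.1
  rw [← integral_mul_exp_neg_mul,
    intervalIntegral.integral_of_le (rpow_mul_le_rpow_add_one_mul hp.le hb.le x),
    ← integral_mul_const]
  have hG : IntegrableOn (fun t => p ^ r * (a * (t ^ (-(r / b)) * exp (-(a * t))))) (Ioi 0) :=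
    ((integrableOn_rpow_neg_mul_exp_neg_mul ha ((div_lt_one hb).2 hrb)).const_mul a).const_mul _
  refine setIntegral_mono_on (Continuous.integrableOn_Ioc (by fun_prop)) (hG.mono_set hpos)
    measurableSet_Ioc fun t ht => ?_
  calc a * exp (-(a * t)) * p ^ (-(x * r))
      ≤ a * exp (-(a * t)) * (p ^ r * t ^ (-(r / b))) := mul_le_mul_of_nonneg_left
        (rpow_neg_mul_le_mul_rpow_neg_div hp0 hb hr (hpos ht) ht.2) (by positivity)
    _ = p ^ r * (a * (t ^ (-(r / b)) * exp (-(a * t)))) := by ring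

end Real

/-- The key moment estimate: the two-sided series
`∑_{k∈ℤ} (e^{-a p^{kb}} - e^{-a p^{(k+1)b}}) p^{-kr}` is bounded by
`p^r a^{r/b} Γ(1 - r/b)`. -/
theorem stmt_4 (p a b r : ℝ) (hp : 1 < p) (ha : 0 < a) (hb : 0 < b)
    (hr : 0 < r) (hrb : r < b) :
    ∑' k : ℤ,
        (Real.exp (-(a * p ^ ((k : ℝ) * b))) - Real.exp (-(a * p ^ (((k : ℝ) + 1) * b)))) *
          p ^ (-((k : ℝ) * r))
      ≤ p ^ r * a ^ (r / b) * Real.Gamma (1 - r / b) := by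
  have hrb' : r / b < 1 := (div_lt_one hb).2 hrb
  have hterm_nonneg (x : ℝ) :
      0 ≤ (exp (-(a * p ^ (x * b))) - exp (-(a * p ^ ((x + 1) * b)))) * p ^ (-(x * r)) :=
    mul_nonneg (sub_nonneg.2 (exp_le_exp.2 (neg_le_neg (mul_le_mul_of_nonneg_left
      (rpow_mul_le_rpow_add_one_mul hp.le hb.le x) ha.le)))) (rpow_nonneg (by linarith) _)
  have hsum := tsum_le_setIntegral_iUnion (μ := volume) (fun k : ℤ => hterm_nonneg k)
    (fun _ => measurableSet_Ioc) (pairwise_disjoint_on_Ioc_rpow_intCast_mul hp.le hb.le)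
    (by rw [iUnion_Ioc_rpow_intCast_mul hp hb]
        exact ((integrableOn_rpow_neg_mul_exp_neg_mul ha hrb').const_mul a).const_mul (p ^ r))
    fun k => exp_sub_exp_mul_rpow_le_setIntegral hp ha hb hr.le hrb
  rwa [iUnion_Ioc_rpow_intCast_mul hp hb, integral_const_mul,
    integral_mul_rpow_neg_mul_exp_neg_mul ha hrb', ← mul_assoc] at hsum
end

section
/- Let p ≥ 2 be real, b > 0, D > 0, and h ∈ (0,1). Define σ(h,1) = (D/(p-1))(p(p^{hb}+1)/(p^b + p^{hb}) - p^{-b}), σ(h,2) = D(1 + (p^b - 1)/((p-1)(p^b + p^{hb}))), and σ(max) = D(p^{b+2} - 1)/(p^b(p^2 - 1)). Then σ(h,1) < σ(max) < σ(h,2). -/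
/-- Strict ordering of the diffusion coefficients: `σ(h,1) < σ(max) < σ(h,2)`. -/
theorem stmt_9 (p b D h : ℝ) (hp : 2 ≤ p) (hb : 0 < b) (hD : 0 < D)
    (hh : h ∈ Set.Ioo (0:ℝ) 1) (σ₁ σ₂ σmax : ℝ)
    (hσ₁ : σ₁ = D / (p - 1) * (p * (p ^ (h * b) + 1) / (p ^ b + p ^ (h * b)) - p ^ (-b)))
    (hσ₂ : σ₂ = D * (1 + (p ^ b - 1) / ((p - 1) * (p ^ b + p ^ (h * b)))))
    (hσm : σmax = D * (p ^ (b + 2) - 1) / (p ^ b * (p ^ (2:ℝ) - 1))) :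
    σ₁ < σmax ∧ σmax < σ₂ := by
  obtain ⟨hh0, hh1⟩ := hh
  have hp0 : (0:ℝ) < p := by linarith
  have hp1 : (1:ℝ) < p := by linarith
  set A := p ^ b with hA
  set H := p ^ (h * b) with hH
  have hA1 : 1 < A := Real.one_lt_rpow_iff_of_pos hp0 |>.mpr (Or.inl ⟨hp1, hb⟩)
  have hH1 : 1 < H := Real.one_lt_rpow_iff_of_pos hp0 |>.mpr (Or.inl ⟨hp1, by positivity⟩)
  have hHA : H < A := by
    rw [hH, hA]
    exact (Real.rpow_lt_rpow_left_iff hp1).mpr (by nlinarith)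
  have hApos : (0:ℝ) < A := by linarith
  have hHpos : (0:ℝ) < H := by linarith
  have hnegb : p ^ (-b) = A⁻¹ := by rw [hA, Real.rpow_neg hp0.le]
  have hb2 : p ^ (b + 2) = A * p ^ (2:ℝ) := by rw [hA, Real.rpow_add hp0]
  have hp2 : p ^ (2:ℝ) = p * p := by
    rw [show (2:ℝ) = ((2:ℕ):ℝ) by norm_num, Real.rpow_natCast]; ring
  have hpm1 : (0:ℝ) < p - 1 := by linarith
  have hAH : (0:ℝ) < A + H := by linarith
  have hpp1 : (0:ℝ) < p * p - 1 := by nlinarith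
  subst hσ₁ hσ₂ hσm
  rw [hnegb, hb2, hp2]
  constructor
  · have l1 : D / (p - 1) * (p * (H + 1) / (A + H) - A⁻¹)
        = D * (p * (H + 1) * A - (A + H)) / ((p - 1) * ((A + H) * A)) := by
      field_simp
    rw [l1]
    rw [div_lt_div_iff₀ (by positivity) (by positivity)]
    nlinarith [mul_pos (mul_pos (mul_pos (mul_pos (mul_pos hD hApos) hpm1) hp0)
      (by linarith : (0:ℝ) < A - 1)) (by nlinarith : (0:ℝ) < p * A - H)]
  · have l2 : D * (1 + (A - 1) / ((p - 1) * (A + H)))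
        = D * ((p - 1) * (A + H) + (A - 1)) / ((p - 1) * (A + H)) := by
      field_simp
    rw [l2]
    rw [div_lt_div_iff₀ (by positivity) (by positivity)]
    nlinarith [mul_pos (mul_pos (mul_pos hD hpm1) (by linarith : (0:ℝ) < A - 1))
      (by nlinarith : (0:ℝ) < p * A - H)]
end

section
/- Let p ≥ 2 be real, b > 0, D > 0. With σ(h,1) = (D/(p-1))(p(p^{hb}+1)/(p^b + p^{hb}) - p^{-b}) and σ(max) = D(p^{b+2} - 1)/(p^b(p^2 - 1)), the limit of σ(h,1) as h → 1⁻ equals D(p^{b+1} + p - 2)/(2p^b(p-1)), and σ(max) − lim_{h→1⁻} σ(h,1) = D(p^b − 1)/(2 p^{b−1}(p+1)), which is strictly positive. -/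
/-! The coefficient `σ(h,1)` is continuous in `h` on all of `ℝ` (its denominator `p^b + p^(hb)` is
positive), so the one-sided limit at `h = 1` is just its value there. The value and the gap are
then rational identities in `x = p ^ b`. -/

open Filter Topology

noncomputable def firstDiffusionCoeff (p b D h : ℝ) : ℝ :=
  D / (p - 1) * (p * (p ^ (h * b) + 1) / (p ^ b + p ^ (h * b)) - p ^ (-b))

lemma continuous_firstDiffusionCoeff {p : ℝ} (hp : 0 < p) (b D : ℝ) :
    Continuous (firstDiffusionCoeff p b D) := by
  unfold firstDiffusionCoeff
  fun_prop (disch := intro; positivity)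

section

variable {p x : ℝ} (D : ℝ)

lemma firstDiffusionCoeff_one_eq (hp : 1 < p) (hx : 0 < x) :
    D / (p - 1) * (p * (x + 1) / (x + x) - x⁻¹) = D * (x * p + p - 2) / (2 * x * (p - 1)) := by
  have : p - 1 ≠ 0 := by linarith
  field_simp
  ring

lemma maxDiffusionCoeff_sub_eq (hp : 1 < p) (hx : 0 < x) :
    D * (x * p ^ 2 - 1) / (x * (p ^ 2 - 1)) - D * (x * p + p - 2) / (2 * x * (p - 1)) =
      D * (x - 1) / (2 * (x / p) * (p + 1)) := by
  have : p - 1 ≠ 0 := by linarith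
  have : p ^ 2 - 1 ≠ 0 := by nlinarith
  have : p + 1 ≠ 0 := by linarith
  have : p ≠ 0 := by linarith
  field_simp
  ring

end

/-- The jump of the first-component diffusion coefficient at `h = 1`:
`σ(h,1) → D(p^{b+1}+p-2)/(2p^b(p-1))` as `h → 1⁻`, and the gap
`σ(max) - lim_{h→1⁻} σ(h,1) = D(p^b-1)/(2p^{b-1}(p+1)) > 0`. -/
theorem stmt_10 (p b D : ℝ) (hp : 2 ≤ p) (hb : 0 < b) (hD : 0 < D)
    (σ₁ : ℝ → ℝ) (σmax L : ℝ)
    (hσ₁ : ∀ h, σ₁ h = D / (p - 1) * (p * (p ^ (h * b) + 1) / (p ^ b + p ^ (h * b)) - p ^ (-b)))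
    (hσm : σmax = D * (p ^ (b + 2) - 1) / (p ^ b * (p ^ (2:ℝ) - 1)))
    (hL : L = D * (p ^ (b + 1) + p - 2) / (2 * p ^ b * (p - 1))) :
    Filter.Tendsto σ₁ (nhdsWithin 1 (Set.Iio 1)) (nhds L) ∧
      σmax - L = D * (p ^ b - 1) / (2 * p ^ (b - 1) * (p + 1)) ∧
      0 < D * (p ^ b - 1) / (2 * p ^ (b - 1) * (p + 1)) := by
  have hp0 : 0 < p := by linarith
  have hp1 : 1 < p := by linarith
  have hpb : 1 < p ^ b := Real.one_lt_rpow hp1 hb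
  rw [Real.rpow_add_one hp0.ne'] at hL
  rw [Real.rpow_sub_one hp0.ne']
  refine ⟨?_, ?_, by have := sub_pos.2 hpb; positivity⟩
  · have hσ : σ₁ = firstDiffusionCoeff p b D := funext hσ₁
    have hσ1 : firstDiffusionCoeff p b D 1 = L := by
      rw [hL, firstDiffusionCoeff, one_mul, Real.rpow_neg hp0.le,
        firstDiffusionCoeff_one_eq D hp1 (by linarith)]
    rw [hσ, ← hσ1]
    exact ((continuous_firstDiffusionCoeff hp0 b D).tendsto 1).mono_left nhdsWithin_le_nhds
  · rw [hσm, hL, Real.rpow_add hp0, Real.rpow_two]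
    exact maxDiffusionCoeff_sub_eq D hp1 (by linarith)
end

section
/- Let p ≥ 2 be real, b > 0, D > 0. With σ(h,2) = D(1 + (p^b − 1)/((p−1)(p^b + p^{hb}))) and σ(max) = D(p^{b+2} − 1)/(p^b(p^2 − 1)), the limit of σ(h,2) as h → 1⁻ equals D(1 + (p^b − 1)/(2p^b(p−1))), and lim_{h→1⁻} σ(h,2) − σ(max) = D(p^b − 1)/(2p^b(p+1)), which is strictly positive. -/
/-! The coefficient `σ(h,2)` is a continuous function of `h` on all of `ℝ` (its denominator
`(p - 1)(p^b + p^{hb})` never vanishes), so its left limit at `h = 1` is its value there, where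
`p^{hb} = p^b`. The gap to `σ(max)` is then a rational identity in `x = p^b` and `p`, positive
because `p^b > 1`. -/

lemma continuous_mul_one_add_div_add_rpow {p : ℝ} (hp : 1 < p) (b c D : ℝ) :
    Continuous fun h : ℝ => D * (1 + c / ((p - 1) * (p ^ b + p ^ (h * b)))) := by
  have hp0 : 0 < p := by linarith
  have hden : ∀ h : ℝ, (p - 1) * (p ^ b + p ^ (h * b)) ≠ 0 := fun h => by
    have : 0 < p - 1 := by linarith
    positivity
  have : Continuous fun h : ℝ => p ^ (h * b) := by fun_prop (disch := positivity)
  exact continuous_const.mul (continuous_const.add (continuous_const.div (by fun_prop) hden))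

lemma mul_one_add_div_sub_div_eq {K : Type*} [Field K] [CharZero K] {p x : K} (hx : x ≠ 0)
    (hp₁ : p - 1 ≠ 0) (hp₂ : p + 1 ≠ 0) (D : K) :
    D * (1 + (x - 1) / (2 * x * (p - 1))) - D * (x * p ^ 2 - 1) / (x * (p ^ 2 - 1)) =
      D * (x - 1) / (2 * x * (p + 1)) := by
  have hsq : p ^ 2 - 1 ≠ 0 := by
    rw [show p ^ 2 - 1 = (p - 1) * (p + 1) by ring]
    exact mul_ne_zero hp₁ hp₂
  field_simp
  ring

/-- The jump of the second-component diffusion coefficient at `h = 1`: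
`σ(h,2) → D(1 + (p^b-1)/(2p^b(p-1)))` as `h → 1⁻`, and the gap
`lim_{h→1⁻} σ(h,2) - σ(max) = D(p^b-1)/(2p^b(p+1)) > 0`. -/
theorem stmt_11 (p b D : ℝ) (hp : 2 ≤ p) (hb : 0 < b) (hD : 0 < D)
    (σ₂ : ℝ → ℝ) (σmax L : ℝ)
    (hσ₂ : ∀ h, σ₂ h = D * (1 + (p ^ b - 1) / ((p - 1) * (p ^ b + p ^ (h * b)))))
    (hσm : σmax = D * (p ^ (b + 2) - 1) / (p ^ b * (p ^ (2:ℝ) - 1)))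
    (hL : L = D * (1 + (p ^ b - 1) / (2 * p ^ b * (p - 1)))) :
    Filter.Tendsto σ₂ (nhdsWithin 1 (Set.Iio 1)) (nhds L) ∧
      L - σmax = D * (p ^ b - 1) / (2 * p ^ b * (p + 1)) ∧
      0 < D * (p ^ b - 1) / (2 * p ^ b * (p + 1)) := by
  have hp₁ : 1 < p := by linarith
  have hp₀ : 0 < p := by linarith
  have hpb : 1 < p ^ b := Real.one_lt_rpow hp₁ hb
  refine ⟨?_, ?_, ?_⟩
  · have hσ₂_one : σ₂ 1 = L := by
      rw [hσ₂, hL, one_mul]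
      ring_nf
    rw [← hσ₂_one, funext hσ₂]
    exact ((continuous_mul_one_add_div_add_rpow hp₁ b _ D).tendsto 1).mono_left
      nhdsWithin_le_nhds
  · have hpow : p ^ (b + 2) = p ^ b * p ^ (2:ℕ) := by
      rw [Real.rpow_add hp₀, Real.rpow_two]
    rw [hσm, hL, hpow, Real.rpow_two]
    exact mul_one_add_div_sub_div_eq (by positivity) (by linarith) (by linarith) D
  · have : 0 < p ^ b - 1 := by linarith
    positivity
end

section
/- Let p ≥ 2 be real, b > 0, D > 0. The function h ↦ (D/(p−1))(p(p^{hb}+1)/(p^b + p^{hb}) − p^{−b}) is strictly increasing on (0,1), and the function h ↦ D(1 + (p^b − 1)/((p−1)(p^b + p^{hb}))) is strictly decreasing on (0,1). -/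
/-- Monotonicity in the anisotropy parameter: `h ↦ σ(h,1)` is strictly
increasing on `(0,1)` and `h ↦ σ(h,2)` is strictly decreasing on `(0,1)`. -/
theorem stmt_13 (p b D : ℝ) (hp : 2 ≤ p) (hb : 0 < b) (hD : 0 < D) :
    StrictMonoOn
        (fun h : ℝ => D / (p - 1) * (p * (p ^ (h * b) + 1) / (p ^ b + p ^ (h * b)) - p ^ (-b)))
        (Set.Ioo 0 1) ∧
      StrictAntiOn
        (fun h : ℝ => D * (1 + (p ^ b - 1) / ((p - 1) * (p ^ b + p ^ (h * b)))))
        (Set.Ioo 0 1) := by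
  have hp1 : (1 : ℝ) < p := by linarith
  have hc1 : (1 : ℝ) < p ^ b := Real.one_lt_rpow_iff_of_pos (by linarith) |>.2 (Or.inl ⟨hp1, hb⟩)
  have hc0 : (0 : ℝ) < p ^ b := by linarith
  constructor
  · intro x hx y hy hxy
    have hst : p ^ (x * b) < p ^ (y * b) :=
      Real.rpow_lt_rpow_left_iff hp1 |>.2 (by nlinarith [hx.1, hy.1])
    have hs0 : (0 : ℝ) < p ^ (x * b) := Real.rpow_pos_of_pos (by linarith) _
    have ht0 : (0 : ℝ) < p ^ (y * b) := Real.rpow_pos_of_pos (by linarith) _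
    set s := p ^ (x * b)
    set t := p ^ (y * b)
    have key : p * (s + 1) / (p ^ b + s) < p * (t + 1) / (p ^ b + t) := by
      rw [div_lt_div_iff₀ (by linarith) (by linarith)]
      nlinarith [mul_pos (sub_pos.2 hst) (sub_pos.2 hc1)]
    have hD' : 0 < D / (p - 1) := div_pos hD (by linarith)
    simp only
    have := mul_lt_mul_of_pos_left (sub_lt_sub_right key (p ^ (-b))) hD'
    linarith
  · intro x hx y hy hxy
    have hst : p ^ (x * b) < p ^ (y * b) :=
      Real.rpow_lt_rpow_left_iff hp1 |>.2 (by nlinarith [hx.1, hy.1])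
    have hs0 : (0 : ℝ) < p ^ (x * b) := Real.rpow_pos_of_pos (by linarith) _
    have ht0 : (0 : ℝ) < p ^ (y * b) := Real.rpow_pos_of_pos (by linarith) _
    set s := p ^ (x * b)
    set t := p ^ (y * b)
    have key : (p ^ b - 1) / ((p - 1) * (p ^ b + t)) < (p ^ b - 1) / ((p - 1) * (p ^ b + s)) :=
      div_lt_div_of_pos_left (by linarith) (by nlinarith)
        (by nlinarith)
    simp only
    nlinarith
end

section
/- Let p be a prime, b > 0, α ∈ (0,2) with α/p^b < 1, r ∈ (0,b), and n ∈ ℕ. Then there exists a constant K, independent of n, such that ∑_{i=2}^∞ ((1 − α p^{−ib})^n − (1 − α p^{−(i−1)b})^n)(p^{ir} − p^{−2i}) ≤ K n^{r/b}. -/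
lemma pow_sub_pow_le_aux (A B : ℝ) (hB : 0 ≤ B) (hBA : B ≤ A) (hA : A ≤ 1) :
    ∀ n : ℕ, A ^ n - B ^ n ≤ n * (A - B) := by
  intro n
  induction n with
  | zero => simp
  | succ n ih =>
      have hA0 : 0 ≤ A := hB.trans hBA
      have hnn : 0 ≤ A ^ n - B ^ n := by
        have := pow_le_pow_left₀ hB hBA n
        linarith
      have h2 : A * (A ^ n - B ^ n) ≤ A ^ n - B ^ n := by nlinarith
      have h3 : (A - B) * B ^ n ≤ (A - B) * 1 := by
        apply mul_le_mul_of_nonneg_left _ (by linarith)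
        exact pow_le_one₀ hB (hBA.trans hA)
      have h1 : A ^ (n+1) - B ^ (n+1) = A * (A ^ n - B ^ n) + (A - B) * B ^ n := by ring
      push_cast
      nlinarith

lemma aux_split (q t θ : ℝ) (hq1 : 1 < q) (ht1 : 1 < t) (htq : t < q)
    (hθ0 : 0 ≤ θ) (htθ : ∀ m : ℕ, t ^ m = (q ^ m) ^ θ)
    (n : ℕ) (hn : 1 ≤ n) (f : ℕ → ℝ)
    (hf0 : ∀ i, 0 ≤ f i)
    (hf1 : ∀ i, f i ≤ t ^ (i + 2))
    (hf2 : ∀ i, f i ≤ 2 * n * (q ^ (i + 1))⁻¹ * t ^ (i + 2)) :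
    ∑' i, f i ≤ (t ^ 2 / (t - 1) + 2 * t ^ 2 / (1 - t / q)) * (n : ℝ) ^ θ := by
  have hq0 : 0 < q := lt_trans one_pos hq1
  have ht0 : 0 < t := lt_trans one_pos ht1
  set ρ : ℝ := t / q with hρdef
  have hρ0 : 0 < ρ := div_pos ht0 hq0
  have hρ1 : ρ < 1 := (div_lt_one hq0).mpr htq
  have hρ1' : 0 < 1 - ρ := by linarith
  have hgeo : Summable (fun i : ℕ => (2 * n * t ^ 2 / q) * ρ ^ i) :=
    (summable_geometric_of_lt_one hρ0.le hρ1).mul_left _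
  have hf2' : ∀ i, f i ≤ (2 * n * t ^ 2 / q) * ρ ^ i := by
    intro i
    refine (hf2 i).trans_eq ?_
    rw [hρdef, div_pow]
    field_simp
    ring
  have hsum : Summable f := Summable.of_nonneg_of_le hf0 hf2' hgeo
  set m : ℕ := ⌊Real.logb q (n : ℝ)⌋₊ with hm
  have hn0 : (0:ℝ) < n := by exact_mod_cast hn
  have hn1 : (1:ℝ) ≤ n := by exact_mod_cast hn
  have hlogb0 : 0 ≤ Real.logb q (n : ℝ) := Real.logb_nonneg hq1 hn1
  have hqm : (q : ℝ) ^ m ≤ n := by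
    have h1 : (m : ℝ) ≤ Real.logb q (n : ℝ) := Nat.floor_le hlogb0
    calc q ^ m = q ^ (m : ℝ) := by rw [Real.rpow_natCast]
      _ ≤ q ^ Real.logb q (n : ℝ) := Real.rpow_le_rpow_of_exponent_le hq1.le h1
      _ = n := Real.rpow_logb hq0 (ne_of_gt hq1) hn0
  have hnq : (n : ℝ) ≤ q ^ (m + 1) := by
    have h1 : Real.logb q (n : ℝ) < (m : ℝ) + 1 := Nat.lt_floor_add_one _
    calc (n : ℝ) = q ^ Real.logb q (n : ℝ) := (Real.rpow_logb hq0 (ne_of_gt hq1) hn0).symm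
      _ ≤ q ^ ((m : ℝ) + 1) := Real.rpow_le_rpow_of_exponent_le hq1.le h1.le
      _ = q ^ (m + 1) := by rw [← Real.rpow_natCast q (m+1)]; push_cast; ring_nf
  have htm : t ^ m ≤ (n : ℝ) ^ θ := by
    rw [htθ m]
    exact Real.rpow_le_rpow (pow_nonneg hq0.le m) hqm hθ0
  rw [← Summable.sum_add_tsum_nat_add m hsum]
  have ht1' : 0 < t - 1 := by linarith
  -- first part
  have hS1 : ∑ i ∈ Finset.range m, f i ≤ t ^ 2 / (t - 1) * t ^ m := by
    calc ∑ i ∈ Finset.range m, f i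
        ≤ ∑ i ∈ Finset.range m, t ^ (i + 2) := Finset.sum_le_sum fun i _ => hf1 i
      _ = t ^ 2 * ((t ^ m - 1) / (t - 1)) := by
          rw [← geom_sum_eq (ne_of_gt ht1) m, Finset.mul_sum]
          exact Finset.sum_congr rfl fun i _ => by ring
      _ ≤ t ^ 2 * (t ^ m / (t - 1)) := by
          gcongr
          linarith
      _ = t ^ 2 / (t - 1) * t ^ m := by ring
  -- second part
  have hshift : Summable (fun i => f (i + m)) := (summable_nat_add_iff m).mpr hsum
  have hS2 : ∑' i, f (i + m) ≤ 2 * t ^ 2 / (1 - ρ) * t ^ m := by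
    have hb2 : ∀ i : ℕ, f (i + m) ≤ (2 * (n : ℝ) * t ^ (m + 2) / q ^ (m + 1)) * ρ ^ i := by
      intro i
      refine (hf2 (i + m)).trans_eq ?_
      rw [hρdef, div_pow]
      have h1 : (q:ℝ) ^ (i + m + 1) ≠ 0 := by positivity
      field_simp
      ring
    calc ∑' i, f (i + m)
        ≤ ∑' i : ℕ, (2 * (n : ℝ) * t ^ (m + 2) / q ^ (m + 1)) * ρ ^ i := by
          refine Summable.tsum_le_tsum hb2 hshift ?_
          exact (summable_geometric_of_lt_one hρ0.le hρ1).mul_left _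
      _ = (2 * (n : ℝ) * t ^ (m + 2) / q ^ (m + 1)) * (1 - ρ)⁻¹ := by
          rw [tsum_mul_left, tsum_geometric_of_lt_one hρ0.le hρ1]
      _ ≤ (2 * t ^ (m + 2)) * (1 - ρ)⁻¹ := by
          apply mul_le_mul_of_nonneg_right _ (by positivity)
          rw [div_le_iff₀ (by positivity)]
          nlinarith [pow_pos ht0 (m+2)]
      _ = 2 * t ^ 2 / (1 - ρ) * t ^ m := by
          rw [pow_add]
          field_simp
  have hK1 : 0 ≤ t ^ 2 / (t - 1) := by positivity
  have hK2 : 0 ≤ 2 * t ^ 2 / (1 - ρ) := by positivity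
  calc ∑ i ∈ Finset.range m, f i + ∑' i, f (i + m)
      ≤ t ^ 2 / (t - 1) * t ^ m + 2 * t ^ 2 / (1 - ρ) * t ^ m := add_le_add hS1 hS2
    _ = (t ^ 2 / (t - 1) + 2 * t ^ 2 / (1 - ρ)) * t ^ m := by ring
    _ ≤ (t ^ 2 / (t - 1) + 2 * t ^ 2 / (1 - ρ)) * (n : ℝ) ^ θ := by
        apply mul_le_mul_of_nonneg_left htm
        positivity

/-- The moment estimate for the hierarchical random walk: the tail sum over
shells `i ≥ 2` is bounded by `K n^{r/b}` with `K` independent of `n`. -/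
theorem stmt_18 (p : ℕ) (hp : p.Prime) (b α r : ℝ) (hb : 0 < b)
    (hα : α ∈ Set.Ioo (0:ℝ) 2) (hαp : α / (p : ℝ) ^ b < 1)
    (hr : 0 < r) (hrb : r < b) :
    ∃ K : ℝ, ∀ n : ℕ,
      ∑' i : ℕ,
          (((1 - α * (p : ℝ) ^ (-(((i : ℝ) + 2) * b))) ^ n -
              (1 - α * (p : ℝ) ^ (-(((i : ℝ) + 1) * b))) ^ n) *
            ((p : ℝ) ^ (((i : ℝ) + 2) * r) - (p : ℝ) ^ (-(2 * ((i : ℝ) + 2)))))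
        ≤ K * (n : ℝ) ^ (r / b) := by
  obtain ⟨hα0, hα2⟩ := hα
  have hP2 : (2:ℝ) ≤ (p : ℝ) := by exact_mod_cast hp.two_le
  have hP1 : (1:ℝ) < (p : ℝ) := lt_of_lt_of_le one_lt_two hP2
  have hP0 : (0:ℝ) < (p : ℝ) := lt_trans one_pos hP1
  set q : ℝ := (p : ℝ) ^ b with hqdef
  set t : ℝ := (p : ℝ) ^ r with htdef
  set u : ℝ := (p : ℝ) ^ (-2 : ℝ) with hudef
  have hq1 : 1 < q := Real.one_lt_rpow_iff_of_pos hP0 |>.mpr (Or.inl ⟨hP1, hb⟩)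
  have ht1 : 1 < t := Real.one_lt_rpow_iff_of_pos hP0 |>.mpr (Or.inl ⟨hP1, hr⟩)
  have hq0 : 0 < q := lt_trans one_pos hq1
  have htq : t < q := Real.rpow_lt_rpow_left_iff hP1 |>.mpr hrb
  have hu0 : 0 < u := Real.rpow_pos_of_pos hP0 _
  have hu1 : u < 1 := Real.rpow_lt_one_of_one_lt_of_neg hP1 (by norm_num)
  have hαq : α / q < 1 := hαp
  have hαq0 : 0 < α / q := div_pos hα0 hq0
  -- rewriting rpow exponents as nat powers
  have e1 : ∀ i : ℕ, (p : ℝ) ^ (-(((i : ℝ) + 2) * b)) = (q ^ (i + 2))⁻¹ := by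
    intro i
    rw [Real.rpow_neg hP0.le,
      show (((i : ℝ) + 2) * b) = b * ((i + 2 : ℕ) : ℝ) by push_cast; ring,
      Real.rpow_mul hP0.le, Real.rpow_natCast]
  have e2 : ∀ i : ℕ, (p : ℝ) ^ (-(((i : ℝ) + 1) * b)) = (q ^ (i + 1))⁻¹ := by
    intro i
    rw [Real.rpow_neg hP0.le,
      show (((i : ℝ) + 1) * b) = b * ((i + 1 : ℕ) : ℝ) by push_cast; ring,
      Real.rpow_mul hP0.le, Real.rpow_natCast]
  have e3 : ∀ i : ℕ, (p : ℝ) ^ (((i : ℝ) + 2) * r) = t ^ (i + 2) := by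
    intro i
    rw [show (((i : ℝ) + 2) * r) = r * ((i + 2 : ℕ) : ℝ) by push_cast; ring,
      Real.rpow_mul hP0.le, Real.rpow_natCast]
  have e4 : ∀ i : ℕ, (p : ℝ) ^ (-(2 * ((i : ℝ) + 2))) = u ^ (i + 2) := by
    intro i
    rw [show (-(2 * ((i : ℝ) + 2))) = (-2 : ℝ) * ((i + 2 : ℕ) : ℝ) by push_cast; ring,
      Real.rpow_mul hP0.le, Real.rpow_natCast]
  -- bounds on the factors
  have hqk : ∀ k : ℕ, 1 ≤ k → α * (q ^ k)⁻¹ ≤ α / q := by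
    intro k hk
    rw [div_eq_mul_inv]
    apply mul_le_mul_of_nonneg_left _ hα0.le
    apply inv_anti₀ hq0
    calc q = q ^ 1 := (pow_one q).symm
      _ ≤ q ^ k := pow_le_pow_right₀ hq1.le hk
  have hqk0 : ∀ k : ℕ, 0 < α * (q ^ k)⁻¹ := fun k => by positivity
  refine ⟨t ^ 2 / (t - 1) + 2 * t ^ 2 / (1 - t / q), fun n => ?_⟩
  rcases Nat.eq_zero_or_pos n with hn | hn
  · subst hn
    simp only [pow_zero, sub_self, zero_mul, tsum_zero, Nat.cast_zero]
    rw [Real.zero_rpow (by positivity : r / b ≠ 0), mul_zero]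
  · -- apply the abstract lemma
    have hf0 : ∀ i : ℕ,
        0 ≤ ((1 - α * (p : ℝ) ^ (-(((i : ℝ) + 2) * b))) ^ n -
              (1 - α * (p : ℝ) ^ (-(((i : ℝ) + 1) * b))) ^ n) *
            ((p : ℝ) ^ (((i : ℝ) + 2) * r) - (p : ℝ) ^ (-(2 * ((i : ℝ) + 2)))) := by
      intro i
      rw [e1 i, e2 i, e3 i, e4 i]
      apply mul_nonneg
      · have hBA : 1 - α * (q ^ (i + 1))⁻¹ ≤ 1 - α * (q ^ (i + 2))⁻¹ := by
          have : α * (q ^ (i + 2))⁻¹ ≤ α * (q ^ (i + 1))⁻¹ := by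
            apply mul_le_mul_of_nonneg_left _ hα0.le
            apply inv_anti₀ (by positivity)
            exact pow_le_pow_right₀ hq1.le (by omega)
          linarith
        have hB0 : 0 ≤ 1 - α * (q ^ (i + 1))⁻¹ := by
          have := hqk (i + 1) (by omega); linarith
        have := pow_le_pow_left₀ hB0 hBA n
        linarith
      · have h1 : u ^ (i + 2) ≤ 1 := pow_le_one₀ hu0.le hu1.le
        have h2 : 1 ≤ t ^ (i + 2) := one_le_pow₀ ht1.le
        linarith
    have hfact : ∀ i : ℕ,
        ((1 - α * (p : ℝ) ^ (-(((i : ℝ) + 2) * b))) ^ n -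
              (1 - α * (p : ℝ) ^ (-(((i : ℝ) + 1) * b))) ^ n) ≤
          min 1 (2 * n * (q ^ (i + 1))⁻¹) ∧
        0 ≤ ((1 - α * (p : ℝ) ^ (-(((i : ℝ) + 2) * b))) ^ n -
              (1 - α * (p : ℝ) ^ (-(((i : ℝ) + 1) * b))) ^ n) := by
      intro i
      rw [e1 i, e2 i]
      set A := 1 - α * (q ^ (i + 2))⁻¹ with hA
      set B := 1 - α * (q ^ (i + 1))⁻¹ with hB
      have hB0 : 0 ≤ B := by have := hqk (i + 1) (by omega); rw [hB]; linarith
      have hBA : B ≤ A := by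
        have : α * (q ^ (i + 2))⁻¹ ≤ α * (q ^ (i + 1))⁻¹ := by
          apply mul_le_mul_of_nonneg_left _ hα0.le
          apply inv_anti₀ (by positivity)
          exact pow_le_pow_right₀ hq1.le (by omega)
        rw [hA, hB]; linarith
      have hA1 : A ≤ 1 := by
        have := hqk0 (i + 2); rw [hA]; linarith
      constructor
      · apply le_min
        · have h1 : A ^ n ≤ 1 := pow_le_one₀ (hB0.trans hBA) hA1
          have h2 : 0 ≤ B ^ n := pow_nonneg hB0 n
          linarith
        · have h1 := pow_sub_pow_le_aux A B hB0 hBA hA1 n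
          have h2 : A - B = α * ((q ^ (i + 1))⁻¹ - (q ^ (i + 2))⁻¹) := by
            rw [hA, hB]; ring
          have h3 : (q ^ (i + 2))⁻¹ ≥ 0 := by positivity
          have h4 : (n : ℝ) * (A - B) ≤ 2 * n * (q ^ (i + 1))⁻¹ := by
            rw [h2]
            have h5 : α * ((q ^ (i + 1))⁻¹ - (q ^ (i + 2))⁻¹) ≤ 2 * (q ^ (i + 1))⁻¹ := by
              have h6 : (0:ℝ) ≤ (q ^ (i + 1))⁻¹ := by positivity
              nlinarith
            have hn0 : (0:ℝ) ≤ n := Nat.cast_nonneg n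
            calc (n : ℝ) * (α * ((q ^ (i + 1))⁻¹ - (q ^ (i + 2))⁻¹))
                ≤ (n : ℝ) * (2 * (q ^ (i + 1))⁻¹) := mul_le_mul_of_nonneg_left h5 hn0
              _ = 2 * n * (q ^ (i + 1))⁻¹ := by ring
          exact h1.trans h4
      · have := pow_le_pow_left₀ hB0 hBA n
        linarith
    have htθ : ∀ m : ℕ, t ^ m = (q ^ m) ^ (r / b) := by
      intro m
      have h1 : q ^ m = (p:ℝ) ^ (b * (m:ℝ)) := by
        rw [hqdef, ← Real.rpow_natCast ((p:ℝ) ^ b) m, ← Real.rpow_mul hP0.le]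
      have h2 : t ^ m = (p:ℝ) ^ (r * (m:ℝ)) := by
        rw [htdef, ← Real.rpow_natCast ((p:ℝ) ^ r) m, ← Real.rpow_mul hP0.le]
      rw [h1, h2, ← Real.rpow_mul hP0.le]
      congr 1
      field_simp
    apply aux_split q t (r / b) hq1 ht1 htq (by positivity) htθ n hn
    · exact hf0
    · intro i
      rw [e1 i, e2 i, e3 i, e4 i]
      obtain ⟨h1, h2⟩ := hfact i
      rw [e1 i, e2 i] at h1 h2
      have h3 : t ^ (i+2) - u ^ (i+2) ≤ t ^ (i+2) := by
        have : 0 < u ^ (i+2) := pow_pos hu0 _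
        linarith
      have h4 : 0 ≤ t ^ (i+2) - u ^ (i+2) := by
        have hu' : u ^ (i + 2) ≤ 1 := pow_le_one₀ hu0.le hu1.le
        have ht' : 1 ≤ t ^ (i + 2) := one_le_pow₀ ht1.le
        linarith
      calc (((1 - α * (q ^ (i+2))⁻¹) ^ n - (1 - α * (q ^ (i+1))⁻¹) ^ n)) *
            (t ^ (i+2) - u ^ (i+2))
          ≤ 1 * t ^ (i+2) := mul_le_mul (h1.trans (min_le_left _ _)) h3 h4 one_pos.le
        _ = t ^ (i+2) := one_mul _
    · intro i
      rw [e1 i, e2 i, e3 i, e4 i]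
      obtain ⟨h1, h2⟩ := hfact i
      rw [e1 i, e2 i] at h1 h2
      have h3 : t ^ (i+2) - u ^ (i+2) ≤ t ^ (i+2) := by
        have : 0 < u ^ (i+2) := pow_pos hu0 _
        linarith
      have h4 : 0 ≤ t ^ (i+2) - u ^ (i+2) := by
        have hu' : u ^ (i + 2) ≤ 1 := pow_le_one₀ hu0.le hu1.le
        have ht' : 1 ≤ t ^ (i + 2) := one_le_pow₀ ht1.le
        linarith
      calc (((1 - α * (q ^ (i+2))⁻¹) ^ n - (1 - α * (q ^ (i+1))⁻¹) ^ n)) *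
            (t ^ (i+2) - u ^ (i+2))
          ≤ (2 * n * (q ^ (i+1))⁻¹) * t ^ (i+2) :=
            mul_le_mul (h1.trans (min_le_right _ _)) h3 h4 (by positivity)
end
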